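/- arXiv:2209.05986 — 4 statements merged into one kernel-verified Lean document; each statement's English description precedes it below -/
import Mathlib

section
/- Let ψ₁ be the word length on ℤⁿ and ⟨·,·⟩_{ψ₁} its Gromov form on ℝ[ℤⁿ]. For j ∈ [n] and ℓ ∈ ℤ∖{0}, set u_j(ℓ) = δ_{ℓ e_j} − δ_{(ℓ − sgn(ℓ)) e_j}. Then ⟨u_j(ℓ), u_{j'}(ℓ')⟩_{ψ₁} = 1 if (j,ℓ) = (j',ℓ') and 0 otherwise; i.e. the family {u_j(ℓ)} is orthonormal with respect to the Gromov form. -/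
/-- The Gromov form of the word length ψ₁ on ℤⁿ, on basis vectors. -/
noncomputable def gromovZn (n : ℕ) (g h : Fin n → ℤ) : ℝ :=
  (((∑ j, |g j|) + (∑ j, |h j|) - (∑ j, |(h - g) j|) : ℤ) : ℝ) / 2

/-- Bilinear extension of the Gromov form to ℝ[ℤⁿ]. -/
noncomputable def gromovFormZn (n : ℕ) (a b : (Fin n → ℤ) →₀ ℝ) : ℝ :=
  ∑ g ∈ a.support, ∑ h ∈ b.support, a g * b h * gromovZn n g h

/-- u_j(ℓ) = δ_{ℓe_j} − δ_{(ℓ−sgn ℓ)e_j} ∈ ℝ[ℤⁿ]. -/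
noncomputable def uZn (n : ℕ) (j : Fin n) (ℓ : ℤ) : (Fin n → ℤ) →₀ ℝ :=
  Finsupp.single (Pi.single j ℓ) 1 - Finsupp.single (Pi.single j (ℓ - ℓ.sign)) 1

/-!
On a single axis, `|x| + |y| - |y - x|` is twice the length of the overlap of the segments
`[0, x]` and `[0, y]`, and `u_j(ℓ)` plays the role of the unit segment between `ℓ - sgn ℓ`
and `ℓ`; so `⟨u_j(ℓ), u_j(ℓ')⟩` is the overlap of two unit segments of the integer grid, which
is `1` or `0`. Points on different axes have Gromov product `0`, since `ψ₁` is additive on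
vectors with disjoint supports.
-/

open Finsupp

/-- Twice the Gromov product `(x | y)₀` in `ℤ`. -/
def gromovInt (x y : ℤ) : ℤ := |x| + |y| - |y - x|

lemma gromovZn_eq_sum_gromovInt (n : ℕ) (g h : Fin n → ℤ) :
    gromovZn n g h = ((∑ i, gromovInt (g i) (h i) : ℤ) : ℝ) / 2 := by
  simp only [gromovZn, gromovInt, Pi.sub_apply, Finset.sum_sub_distrib, Finset.sum_add_distrib]

lemma gromovZn_single_single (n : ℕ) (j j' : Fin n) (x y : ℤ) :
    gromovZn n (Pi.single j x) (Pi.single j' y) =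
      if j = j' then (gromovInt x y : ℝ) / 2 else 0 := by
  rw [gromovZn_eq_sum_gromovInt]
  split_ifs with hj
  · subst hj
    simp [Pi.apply_single₂ (fun _ => gromovInt) (fun _ => by simp [gromovInt])]
  · suffices ∀ i, gromovInt ((Pi.single j x : Fin n → ℤ) i) ((Pi.single j' y : Fin n → ℤ) i) = 0 by
      simp only [this, Finset.sum_const_zero, Int.cast_zero, zero_div]
    intro i
    rcases eq_or_ne i j with rfl | hij
    · simp [gromovInt, Pi.single_eq_of_ne hj]
    · simp [gromovInt, Pi.single_eq_of_ne hij]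

lemma gromovFormZn_eq_sum (n : ℕ) (a b : (Fin n → ℤ) →₀ ℝ) :
    gromovFormZn n a b = a.sum fun g x => b.sum fun h y => x * y * gromovZn n g h := rfl

lemma gromovFormZn_sub_left (n : ℕ) (a a' b : (Fin n → ℤ) →₀ ℝ) :
    gromovFormZn n (a - a') b = gromovFormZn n a b - gromovFormZn n a' b := by
  simp only [gromovFormZn_eq_sum]
  exact sum_sub_index fun _ _ _ => by simp only [sub_mul, sum_sub]

lemma gromovFormZn_sub_right (n : ℕ) (a b b' : (Fin n → ℤ) →₀ ℝ) :
    gromovFormZn n a (b - b') = gromovFormZn n a b - gromovFormZn n a b' := by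
  simp only [gromovFormZn_eq_sum, ← sum_sub]
  refine Finset.sum_congr rfl fun g _ => sum_sub_index fun _ _ _ => by ring

lemma gromovFormZn_single_single (n : ℕ) (g h : Fin n → ℤ) (x y : ℝ) :
    gromovFormZn n (single g x) (single h y) = x * y * gromovZn n g h := by
  rw [gromovFormZn_eq_sum, sum_single_index (by simp), sum_single_index (by simp)]

lemma gromovInt_mixed_difference {ℓ ℓ' : ℤ} (hℓ : ℓ ≠ 0) (hℓ' : ℓ' ≠ 0) :
    gromovInt ℓ ℓ' - gromovInt ℓ (ℓ' - ℓ'.sign) - gromovInt (ℓ - ℓ.sign) ℓ'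
      + gromovInt (ℓ - ℓ.sign) (ℓ' - ℓ'.sign) = if ℓ = ℓ' then 2 else 0 := by
  rcases hℓ.lt_or_gt with h | h <;> rcases hℓ'.lt_or_gt with h' | h' <;>
    simp only [gromovInt, Int.sign_eq_one_of_pos, Int.sign_eq_neg_one_of_neg, h, h',
      abs_eq_max_neg] <;>
    split_ifs <;> omega

/-- the family {u_j(ℓ) : j ∈ [n], ℓ ∈ ℤ∖{0}} is orthonormal for the
Gromov form of the word length on ℤⁿ. -/
theorem uZn_orthonormal (n : ℕ) (j j' : Fin n) (ℓ ℓ' : ℤ) (hℓ : ℓ ≠ 0) (hℓ' : ℓ' ≠ 0) :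
    gromovFormZn n (uZn n j ℓ) (uZn n j' ℓ') = if j = j' ∧ ℓ = ℓ' then 1 else 0 := by
  simp only [uZn, gromovFormZn_sub_left, gromovFormZn_sub_right, gromovFormZn_single_single,
    gromovZn_single_single, one_mul]
  by_cases hj : j = j'
  · have hdiff := congrArg (Int.cast : ℤ → ℝ) (gromovInt_mixed_difference hℓ hℓ')
    push_cast at hdiff
    simp only [hj, if_true, true_and]
    split_ifs at hdiff ⊢ <;> linear_combination hdiff / 2
  · simp [hj]
end

section
/- For ℤⁿ with word length ψ₁ and basis vectors u_j(ℓ) as above, the directional derivative coefficient satisfies ⟨δ_g, u_j(ℓ)⟩_{ψ₁} = 1 if g_j · ℓ > 0 and |g_j| ≥ |ℓ|, and 0 otherwise, for all g ∈ ℤⁿ, j ∈ [n], ℓ ∈ ℤ∖{0}. -/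
lemma gromovFormZn_single_one_sub (n : ℕ) (g a b : Fin n → ℤ) :
    gromovFormZn n (Finsupp.single g 1) (Finsupp.single a 1 - Finsupp.single b 1)
      = gromovZn n g a - gromovZn n g b := by
  change (Finsupp.single g 1).sum (fun p c => (_ : (Fin n → ℤ) →₀ ℝ).sum
    fun q d => c * d * gromovZn n p q) = _
  rw [Finsupp.sum_single_index (by simp), Finsupp.sum_sub_index (by intros; ring),
    Finsupp.sum_single_index (by ring), Finsupp.sum_single_index (by ring)]
  ring

lemma gromovZn_eq_sum (n : ℕ) (g h : Fin n → ℤ) :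
    gromovZn n g h = ((∑ k, (|g k| + |h k| - |h k - g k|) : ℤ) : ℝ) / 2 := by
  simp only [gromovZn, Pi.sub_apply, Finset.sum_sub_distrib, Finset.sum_add_distrib]

lemma gromovZn_pi_single (n : ℕ) (g : Fin n → ℤ) (j : Fin n) (m : ℤ) :
    gromovZn n g (Pi.single j m) = ((|g j| + |m| - |m - g j| : ℤ) : ℝ) / 2 := by
  rw [gromovZn_eq_sum, Fintype.sum_eq_single j fun k hk => by simp [hk], Pi.single_eq_same]

lemma abs_add_abs_sub_abs_sub_sub_sign (a ℓ : ℤ) :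
    (|a| + |ℓ| - |ℓ - a|) - (|a| + |ℓ - ℓ.sign| - |ℓ - ℓ.sign - a|)
      = if 0 < a * ℓ ∧ |ℓ| ≤ |a| then 2 else 0 := by
  rcases lt_trichotomy ℓ 0 with hℓ | rfl | hℓ
  · have : 0 < a * ℓ ↔ a < 0 := ⟨fun h => by nlinarith, fun h => mul_pos_of_neg_of_neg h hℓ⟩
    rw [Int.sign_eq_neg_one_of_neg hℓ, if_congr (and_congr_left' this) rfl rfl]
    split_ifs <;> simp only [abs_eq_max_neg] at * <;> omega
  · simp
  · have : 0 < a * ℓ ↔ 0 < a := ⟨fun h => by nlinarith, fun h => mul_pos h hℓ⟩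
    rw [Int.sign_eq_one_of_pos hℓ, if_congr (and_congr_left' this) rfl rfl]
    split_ifs <;> simp only [abs_eq_max_neg] at * <;> omega

theorem deriv_coefficient_Zn_general (n : ℕ) (g : Fin n → ℤ) (j : Fin n) (ℓ : ℤ) :
    gromovFormZn n (Finsupp.single g 1) (uZn n j ℓ)
      = if 0 < g j * ℓ ∧ |ℓ| ≤ |g j| then 1 else 0 := by
  rw [uZn, gromovFormZn_single_one_sub, gromovZn_pi_single, gromovZn_pi_single,
    div_sub_div_same, ← Int.cast_sub, abs_add_abs_sub_abs_sub_sub_sign]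
  split_ifs <;> norm_num

/-- ⟨δ_g, u_j(ℓ)⟩_{ψ₁} = 1 if g_j·ℓ > 0 and |g_j| ≥ |ℓ|, and 0 otherwise. -/
theorem deriv_coefficient_Zn (n : ℕ) (g : Fin n → ℤ) (j : Fin n) (ℓ : ℤ) (hℓ : ℓ ≠ 0) :
    gromovFormZn n (Finsupp.single g 1) (uZn n j ℓ)
      = if 0 < g j * ℓ ∧ |ℓ| ≤ |g j| then 1 else 0 :=
  deriv_coefficient_Zn_general n g j ℓ
end

section
/- On ℤ_{2m} the word length |g| = min{g, 2m−g} (for representatives 0 ≤ g < 2m) is conditionally negative: for every finitely supported complex family (a_g)_{g∈ℤ_{2m}} with ∑ a_g = 0 one has ∑_{g,h} conj(a_g) a_h |h−g| ≤ 0. -/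
/-!
The word length |h - g| on ℤ_{2m} counts the half-arcs `k + {0, …, m-1}` that contain `g` but
not `h`. Writing `B k` for the sum of `a` over the `k`-th half-arc, the quadratic form is therefore
`∑ₖ conj (B k) * (∑ a - B k) = -∑ₖ |B k|²`, which is `≤ 0` as soon as `∑ a = 0`.
-/

open scoped ComplexOrder

open Finset

theorem sum_star_mul_card_separating_nonpos {R X ι : Type*} [Ring R] [PartialOrder R]
    [StarRing R] [StarOrderedRing R] [Fintype ι]
    (p : ι → X → Prop) [∀ k x, Decidable (p k x)] (s : Finset X) (a : X → R)
    (ha : ∑ x ∈ s, a x = 0) :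
    ∑ g ∈ s, ∑ h ∈ s, star (a g) * a h * (#{k | p k g ∧ ¬ p k h} : R) ≤ 0 := by
  set B : ι → R := fun k => ∑ x ∈ s with p k x, a x
  have hcompl (k : ι) : ∑ x ∈ s with ¬ p k x, a x = -B k := by
    rw [eq_neg_iff_add_eq_zero, add_comm, sum_filter_add_sum_filter_not, ha]
  calc ∑ g ∈ s, ∑ h ∈ s, star (a g) * a h * (#{k | p k g ∧ ¬ p k h} : R)
      = ∑ k, (∑ g ∈ s with p k g, star (a g)) * ∑ h ∈ s with ¬ p k h, a h := by
        simp only [sum_filter, sum_mul_sum]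
        simp only [natCast_card_filter, mul_sum]
        rw [sum_congr rfl fun g _ => sum_comm, sum_comm]
        refine sum_congr rfl fun k _ => sum_congr rfl fun g _ => sum_congr rfl fun h _ => ?_
        split_ifs <;> simp_all
    _ = -∑ k, star (B k) * B k := by
        simp only [hcompl, star_sum, B, mul_neg, sum_neg_distrib]
    _ ≤ 0 := neg_nonpos.mpr (sum_nonneg fun k _ => star_mul_self_nonneg (B k))

theorem card_filter_le_add_mod {m t : ℕ} (ht : t < 2 * m) :
    #{j ∈ range m | m ≤ (t + j) % (2 * m)} = min t (2 * m - t) := by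
  have : {j ∈ range m | m ≤ (t + j) % (2 * m)} = Ico (m - t) (min m (2 * m - t)) := by
    ext j
    simp only [mem_filter, mem_range, mem_Ico]
    rcases lt_or_ge (t + j) (2 * m) with hj | hj
    · rw [Nat.mod_eq_of_lt hj]; omega
    · rw [Nat.mod_eq_sub_mod hj]
      have := Nat.mod_le (t + j - 2 * m) (2 * m)
      omega
  rw [this, Nat.card_Ico]
  omega

theorem ZMod.card_halfArcs_separating_eq_min {m : ℕ} [NeZero (2 * m)] (g h : ZMod (2 * m)) :
    #{k | (g - k).val < m ∧ ¬ (h - k).val < m} = min (h - g).val (2 * m - (h - g).val) := by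
  have hval (k : ZMod (2 * m)) : (h - k).val = ((h - g).val + (g - k).val) % (2 * m) := by
    rw [← ZMod.val_add, sub_add_sub_cancel]
  have hcast {j : ℕ} (hj : j < m) : (j : ZMod (2 * m)).val = j :=
    ZMod.val_natCast_of_lt (by omega)
  rw [← card_filter_le_add_mod (ZMod.val_lt (h - g))]
  refine card_nbij' (fun k => (g - k).val) (fun j => g - j) ?_ ?_ ?_ ?_
  · intro k hk
    simp only [coe_filter, mem_univ, true_and, Set.mem_ofPred_eq, mem_range] at hk ⊢
    rw [← hval]
    omega
  · intro j hj
    simp only [coe_filter, mem_univ, true_and, Set.mem_ofPred_eq, mem_range] at hj ⊢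
    rw [hval, sub_sub_cancel, hcast hj.1]
    omega
  · intro k _
    dsimp only
    rw [ZMod.natCast_zmod_val, sub_sub_cancel]
  · intro j hj
    simp only [coe_filter, Set.mem_ofPred_eq, mem_range] at hj
    dsimp only
    rw [sub_sub_cancel, hcast hj.1]

/-- the word length |g| = min{g, 2m−g} on ℤ_{2m} is conditionally
negative. -/
theorem word_length_Z2m_condNeg (m : ℕ) (hm : 0 < m) :
    ∀ a : ZMod (2 * m) →₀ ℂ, (∑ g ∈ a.support, a g) = 0 →
      (∑ g ∈ a.support, ∑ h ∈ a.support, (starRingEnd ℂ) (a g) * a h *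
        ((min ((h - g).val) (2 * m - (h - g).val) : ℕ) : ℂ)) ≤ 0 := by
  intro a ha
  have : NeZero (2 * m) := ⟨by omega⟩
  simpa only [ZMod.card_halfArcs_separating_eq_min, starRingEnd_apply] using
    sum_star_mul_card_separating_nonpos (fun k x : ZMod (2 * m) => (x - k).val < m) a.support a ha
end

section
/- Let ψ(g) = ∑_{j=1}^n |g_j| on ℤ_{2m}^n, where |g_j| = min{g_j, 2m−g_j}. For 1 ≤ ℓ ≤ ℓ' ≤ 2m and j ∈ [n], the Gromov form satisfies ⟨δ_{ℓ e_j}, δ_{ℓ' e_j}⟩_ψ = min{ℓ, 2m−ℓ', max{0, m−ℓ'+ℓ}}. -/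
/-- The word length ψ on ℤ_{2m}ⁿ. -/
def psiZ2m (m n : ℕ) (g : Fin n → ZMod (2 * m)) : ℕ :=
  ∑ j, min ((g j).val) (2 * m - (g j).val)

lemma psiZ2m_single (m n : ℕ) (j : Fin n) (x : ZMod (2 * m)) :
    psiZ2m m n (Pi.single j x) = min x.val (2 * m - x.val) := by
  rw [psiZ2m, Finset.sum_eq_single j]
  · simp
  · intro i _ hij
    simp [Pi.single_eq_of_ne hij]
  · simp

lemma ZMod.min_val_natCast_of_le {N a : ℕ} (ha : a ≤ N) :
    min (a : ZMod N).val (N - (a : ZMod N).val) = min a (N - a) := by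
  rw [ZMod.val_natCast]
  rcases ha.eq_or_lt with rfl | h
  · simp
  · rw [Nat.mod_eq_of_lt h]

lemma half_sum_min_sub_eq {m ℓ ℓ' : ℝ} (h0 : 0 ≤ ℓ) (hle : ℓ ≤ ℓ') (hle' : ℓ' ≤ 2 * m) :
    (min ℓ (2 * m - ℓ) + min ℓ' (2 * m - ℓ') - min (ℓ' - ℓ) (2 * m - (ℓ' - ℓ))) / 2
      = min ℓ (min (2 * m - ℓ') (max 0 (m - ℓ' + ℓ))) := by
  simp only [min_def, max_def]
  split_ifs <;> linarith

theorem gromov_form_Z2mn_diag_general (m n : ℕ) (j : Fin n) (ℓ ℓ' : ℕ)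
    (h2 : ℓ ≤ ℓ') (h3 : ℓ' ≤ 2 * m) :
    ((psiZ2m m n (Pi.single j (ℓ : ZMod (2 * m))) : ℝ)
        + (psiZ2m m n (Pi.single j (ℓ' : ZMod (2 * m))) : ℝ)
        - (psiZ2m m n (Pi.single j ((ℓ' : ZMod (2 * m)) - (ℓ : ZMod (2 * m)))) : ℝ)) / 2
      = min (ℓ : ℝ) (min ((2 * m : ℝ) - ℓ') (max 0 ((m : ℝ) - ℓ' + ℓ))) := by
  rw [← Nat.cast_sub h2, psiZ2m_single, psiZ2m_single, psiZ2m_single,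
    ZMod.min_val_natCast_of_le (h2.trans h3), ZMod.min_val_natCast_of_le h3,
    ZMod.min_val_natCast_of_le ((Nat.sub_le ℓ' ℓ).trans h3)]
  push_cast [Nat.cast_sub h2, Nat.cast_sub h3, Nat.cast_sub (h2.trans h3),
    Nat.cast_sub ((Nat.sub_le ℓ' ℓ).trans h3)]
  exact half_sum_min_sub_eq (Nat.cast_nonneg ℓ) (by exact_mod_cast h2) (by exact_mod_cast h3)

/-- for 1 ≤ ℓ ≤ ℓ' ≤ 2m, the Gromov form satisfies
⟨δ_{ℓe_j}, δ_{ℓ'e_j}⟩_ψ = min{ℓ, 2m−ℓ', max{0, m−ℓ'+ℓ}}. -/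
theorem gromov_form_Z2mn_diag (m n : ℕ) (hm : 0 < m) (j : Fin n) (ℓ ℓ' : ℕ)
    (h1 : 1 ≤ ℓ) (h2 : ℓ ≤ ℓ') (h3 : ℓ' ≤ 2 * m) :
    ((psiZ2m m n (Pi.single j (ℓ : ZMod (2 * m))) : ℝ)
        + (psiZ2m m n (Pi.single j (ℓ' : ZMod (2 * m))) : ℝ)
        - (psiZ2m m n (Pi.single j ((ℓ' : ZMod (2 * m)) - (ℓ : ZMod (2 * m)))) : ℝ)) / 2
      = min (ℓ : ℝ) (min ((2 * m : ℝ) - ℓ') (max 0 ((m : ℝ) - ℓ' + ℓ))) :=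
  gromov_form_Z2mn_diag_general m n j ℓ ℓ' h2 h3
end
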